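/- arXiv:2103.01668 — 3 statements merged into one kernel-verified Lean document; each statement's English description precedes it below -/
import Mathlib

section
/- Suppose there exist r ≥ 2 and a constant c > 0 such that c·a^{(r−2)/2} ≤ φ₂(a) for all a ≥ 1. Let (Ω, μ) be a finite measure space, d ≥ 1, and s = r/(r−1). Then for every w ∈ Lʳ(μ; ℝᵈ) and every f₀ ∈ Lˢ(μ; ℝᵈ), ∫_Ω Ψ(‖w‖²) dμ − ∫_Ω f₀·w dμ ≥ (Φ₁(0) − c/r)·μ(Ω) + (c/r)·‖w‖_{Lʳ}ʳ − ‖f₀‖_{Lˢ}·‖w‖_{Lʳ}. -/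
/-! On `[0, 1]` the potential `Ψ` is bounded below by `Φ₁(0)` because `φ₁ ≥ 0`, while on
`[1, ∞)` integrating the growth condition `φ₂(t) ≥ c t^{(r-2)/2}` gives
`Ψ(a) ≥ (c/r)(a^{r/2} - 1)`. Hence `Ψ(‖w‖²) ≥ Φ₁(0) - c/r + (c/r)‖w‖ʳ` pointwise; integrating this
and bounding the work `∫ f₀·w` by Hölder's inequality with the conjugate exponents `s, r` gives
the estimate. -/

open Set MeasureTheory intervalIntegral
open scoped RealInnerProductSpace

section PotentialBounds

variable {φ : ℝ → ℝ}

lemma integral_le_integral_of_nonneg_on {a b c : ℝ} (hab : a ≤ b)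
    (hca_int : IntervalIntegrable φ volume c a) (hab_int : IntervalIntegrable φ volume a b)
    (hφ : ∀ t ∈ Icc a b, 0 ≤ φ t) :
    ∫ t in c..a, φ t ≤ ∫ t in c..b, φ t := by
  rw [← integral_add_adjacent_intervals hca_int hab_int]
  linarith [integral_nonneg (μ := volume) hab hφ]

lemma mul_rpow_sub_one_div_le_integral {p c a : ℝ} (hp : -1 < p) (ha : 1 ≤ a)
    (hφ : IntervalIntegrable φ volume 1 a) (hlow : ∀ t ∈ Icc 1 a, c * t ^ p ≤ φ t) :
    c * ((a ^ (p + 1) - 1) / (p + 1)) ≤ ∫ t in (1 : ℝ)..a, φ t :=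
  calc c * ((a ^ (p + 1) - 1) / (p + 1)) = ∫ t in (1 : ℝ)..a, c * t ^ p := by
        rw [intervalIntegral.integral_const_mul, integral_rpow (Or.inl hp), Real.one_rpow]
    _ ≤ ∫ t in (1 : ℝ)..a, φ t :=
        integral_mono_on ha ((intervalIntegrable_rpow' hp).const_mul c) hφ hlow

lemma affine_rpow_le_potential {φ₁ φ₂ : ℝ → ℝ} {r c a : ℝ} (hr : 0 < r) (hc : 0 ≤ c)
    (hφ₁c : ContinuousOn φ₁ (Icc 0 1)) (hφ₂c : ContinuousOn φ₂ (Ici 1))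
    (hφ₁nn : ∀ t ∈ Icc (0 : ℝ) 1, 0 ≤ φ₁ t)
    (hlow : ∀ t : ℝ, 1 ≤ t → c * t ^ ((r - 2) / 2) ≤ φ₂ t) (ha : 0 ≤ a) :
    1 / 2 * (∫ t in (1 : ℝ)..0, φ₁ t) - c / r + c / r * a ^ (r / 2) ≤
      if a ≤ 1 then 1 / 2 * ∫ t in (1 : ℝ)..a, φ₁ t else 1 / 2 * ∫ t in (1 : ℝ)..a, φ₂ t := by
  have hΦ₁_zero : ∫ t in (1 : ℝ)..0, φ₁ t ≤ 0 := by
    rw [integral_symm, neg_nonpos]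
    exact integral_nonneg zero_le_one hφ₁nn
  split_ifs with ha1
  · have hΦ₁_mono : ∫ t in (1 : ℝ)..0, φ₁ t ≤ ∫ t in (1 : ℝ)..a, φ₁ t :=
      integral_le_integral_of_nonneg_on ha
        (hφ₁c.mono (uIcc_subset_Icc (by norm_num) (by norm_num))).intervalIntegrable
        (hφ₁c.mono (uIcc_subset_Icc (by norm_num) ⟨ha, ha1⟩)).intervalIntegrable
        fun t ht => hφ₁nn t ⟨ht.1, ht.2.trans ha1⟩
    have hpow : c / r * a ^ (r / 2) ≤ c / r :=
      mul_le_of_le_one_right (by positivity) (Real.rpow_le_one ha ha1 (by positivity))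
    linarith
  · replace ha1 : 1 < a := not_le.1 ha1
    have hφ₂i : IntervalIntegrable φ₂ volume 1 a :=
      (hφ₂c.mono (by rw [uIcc_of_le ha1.le]; exact Icc_subset_Ici_self)).intervalIntegrable
    have hgrowth := mul_rpow_sub_one_div_le_integral (by linarith) ha1.le hφ₂i
      fun t ht => hlow t ht.1
    have hexp : (r - 2) / 2 + 1 = r / 2 := by ring
    have hval : c * ((a ^ (r / 2) - 1) / (r / 2)) = 2 * (c / r * a ^ (r / 2) - c / r) := by
      field_simp
    rw [hexp, hval] at hgrowth
    linarith

end PotentialBounds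

section Integrals

variable {α : Type*} [MeasurableSpace α] {μ : Measure α}

lemma mul_measureReal_univ_add_mul_integral_le [IsFiniteMeasure μ] {g h : α → ℝ} {A B : ℝ}
    (hg : Integrable g μ) (hh : Integrable h μ) (hle : ∀ x, A + B * h x ≤ g x) :
    A * μ.real univ + B * ∫ x, h x ∂μ ≤ ∫ x, g x ∂μ :=
  calc A * μ.real univ + B * ∫ x, h x ∂μ = ∫ x, A + B * h x ∂μ := by
        rw [integral_add (integrable_const _) (hh.const_mul _), MeasureTheory.integral_const,
          MeasureTheory.integral_const_mul, smul_eq_mul, mul_comm]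
    _ ≤ ∫ x, g x ∂μ := integral_mono ((integrable_const _).add (hh.const_mul _)) hg hle

lemma integral_inner_le_Lp_mul_Lq {E : Type*} [NormedAddCommGroup E] [InnerProductSpace ℝ E]
    {f g : α → E} {p q : ℝ} (hpq : p.HolderConjugate q) (hf : MemLp f (ENNReal.ofReal p) μ)
    (hg : MemLp g (ENNReal.ofReal q) μ) :
    ∫ x, ⟪f x, g x⟫ ∂μ ≤ (∫ x, ‖f x‖ ^ p ∂μ) ^ (1 / p) * (∫ x, ‖g x‖ ^ q ∂μ) ^ (1 / q) := by
  have := hpq.ennrealOfReal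
  calc ∫ x, ⟪f x, g x⟫ ∂μ ≤ ‖∫ x, ⟪f x, g x⟫ ∂μ‖ := Real.le_norm_self _
    _ ≤ ∫ x, ‖f x‖ * ‖g x‖ ∂μ :=
        norm_integral_le_of_norm_le (hf.norm.integrable_mul hg.norm)
          (.of_forall fun x => norm_inner_le_norm _ _)
    _ ≤ _ := integral_mul_norm_le_Lp_mul_Lq hpq hf hg

end Integrals

theorem stmt_7_general {Ω : Type*} [MeasurableSpace Ω] (μ : Measure Ω) [IsFiniteMeasure μ]
    (d : ℕ) (r s c : ℝ) (hr : 2 ≤ r) (hs : s = r / (r - 1)) (hc : 0 < c)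
    (φ₁ φ₂ : ℝ → ℝ)
    (hφ₁c : ContinuousOn φ₁ (Icc 0 1)) (hφ₂c : ContinuousOn φ₂ (Ici 1))
    (hφ₁nn : ∀ a ∈ Icc (0:ℝ) 1, 0 ≤ φ₁ a)
    (hlow : ∀ a : ℝ, 1 ≤ a → c * a ^ ((r - 2) / 2) ≤ φ₂ a)
    (Ψ : ℝ → ℝ)
    (hΨ : ∀ a : ℝ, 0 ≤ a →
      Ψ a = if a ≤ 1 then (1/2) * ∫ t in (1:ℝ)..a, φ₁ t
            else (1/2) * ∫ t in (1:ℝ)..a, φ₂ t)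
    (w f₀ : Ω → EuclideanSpace ℝ (Fin d))
    (hw : MemLp w (ENNReal.ofReal r) μ) (hf₀ : MemLp f₀ (ENNReal.ofReal s) μ)
    (hint : Integrable (fun x => Ψ (‖w x‖ ^ 2)) μ) :
    (∫ x, Ψ (‖w x‖ ^ 2) ∂μ) - ∫ x, ⟪f₀ x, w x⟫ ∂μ ≥
      ((1/2) * (∫ t in (1:ℝ)..(0:ℝ), φ₁ t) - c / r) * (μ univ).toReal
      + (c / r) * (∫ x, ‖w x‖ ^ r ∂μ)
      - (∫ x, ‖f₀ x‖ ^ s ∂μ) ^ (1 / s) * (∫ x, ‖w x‖ ^ r ∂μ) ^ (1 / r) := by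
  have hr0 : 0 < r := by linarith
  have hsr : s.HolderConjugate r :=
    ((Real.holderConjugate_iff_eq_conjExponent (by linarith)).2 hs).symm
  have hwr : Integrable (fun x => ‖w x‖ ^ r) μ := by
    simpa [ENNReal.toReal_ofReal hr0.le] using
      hw.integrable_norm_rpow (by simpa using hr0) ENNReal.ofReal_ne_top
  have hpointwise : ∀ x, 1 / 2 * (∫ t in (1 : ℝ)..0, φ₁ t) - c / r + c / r * ‖w x‖ ^ r ≤
      Ψ (‖w x‖ ^ 2) := fun x => by
    have hsq : (‖w x‖ ^ 2) ^ (r / 2) = ‖w x‖ ^ r := by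
      rw [← Real.rpow_natCast_mul (norm_nonneg _), Nat.cast_ofNat, mul_div_cancel₀ r two_ne_zero]
    rw [hΨ _ (sq_nonneg _), ← hsq]
    exact affine_rpow_le_potential hr0 hc.le hφ₁c hφ₂c hφ₁nn hlow (sq_nonneg _)
  have hdissipation := mul_measureReal_univ_add_mul_integral_le hint hwr hpointwise
  have hwork := integral_inner_le_Lp_mul_Lq hsr hf₀ hw
  rw [measureReal_def] at hdissipation
  linarith

/-- coercivity estimate for the dissipation minus the work of the
body force: for w ∈ Lʳ(μ; ℝᵈ) and f₀ ∈ Lˢ(μ; ℝᵈ),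
∫ Ψ(‖w‖²) − ∫ f₀·w ≥ (Φ₁(0) − c/r)·μ(Ω) + (c/r)‖w‖_{Lʳ}ʳ − ‖f₀‖_{Lˢ}‖w‖_{Lʳ}. -/
theorem stmt_7 {Ω : Type*} [MeasurableSpace Ω] (μ : Measure Ω) [IsFiniteMeasure μ]
    (d : ℕ) (hd : 1 ≤ d) (r s c : ℝ) (hr : 2 ≤ r) (hs : s = r / (r - 1)) (hc : 0 < c)
    (φ₁ φ₂ : ℝ → ℝ)
    (hφ₁c : ContinuousOn φ₁ (Icc 0 1)) (hφ₂c : ContinuousOn φ₂ (Ici 1))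
    (hφ₁m : MonotoneOn φ₁ (Icc 0 1)) (hφ₂m : MonotoneOn φ₂ (Ici 1))
    (hφ₁nn : ∀ a ∈ Icc (0:ℝ) 1, 0 ≤ φ₁ a) (hφ₂nn : ∀ a ∈ Ici (1:ℝ), 0 ≤ φ₂ a)
    (hlow : ∀ a : ℝ, 1 ≤ a → c * a ^ ((r - 2) / 2) ≤ φ₂ a)
    (Ψ : ℝ → ℝ)
    (hΨ : ∀ a : ℝ, 0 ≤ a →
      Ψ a = if a ≤ 1 then (1/2) * ∫ t in (1:ℝ)..a, φ₁ t
            else (1/2) * ∫ t in (1:ℝ)..a, φ₂ t)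
    (w f₀ : Ω → EuclideanSpace ℝ (Fin d))
    (hw : MemLp w (ENNReal.ofReal r) μ) (hf₀ : MemLp f₀ (ENNReal.ofReal s) μ)
    (hint : Integrable (fun x => Ψ (‖w x‖ ^ 2)) μ) :
    (∫ x, Ψ (‖w x‖ ^ 2) ∂μ) - ∫ x, ⟪f₀ x, w x⟫ ∂μ ≥
      ((1/2) * (∫ t in (1:ℝ)..(0:ℝ), φ₁ t) - c / r) * (μ univ).toReal
      + (c / r) * (∫ x, ‖w x‖ ^ r ∂μ)
      - (∫ x, ‖f₀ x‖ ^ s ∂μ) ^ (1 / s) * (∫ x, ‖w x‖ ^ r ∂μ) ^ (1 / r) :=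
  stmt_7_general μ d r s c hr hs hc φ₁ φ₂ hφ₁c hφ₂c hφ₁nn hlow Ψ hΨ w f₀ hw hf₀ hint
end

section
/- Let (Ω, μ) be a finite measure space, d ≥ 1, r ≥ 2, s = r/(r−1), and let g : ℝᵈ → ℝ be convex and continuous with 0 ≤ g(x) ≤ C(1 + ‖x‖ʳ) for all x ∈ ℝᵈ and some constant C > 0. Let (vₙ)ₙ ⊂ Lʳ(μ; ℝᵈ) and v ∈ Lʳ(μ; ℝᵈ) be such that ∫_Ω f·vₙ dμ → ∫_Ω f·v dμ as n → ∞ for every f ∈ Lˢ(μ; ℝᵈ) (i.e., vₙ converges weakly to v in Lʳ). Then ∫_Ω g(v) dμ ≤ liminf_{n→∞} ∫_Ω g(vₙ) dμ. -/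
/-!
Write `g` as the supremum of countably many affine minorants `x ↦ lᵢ x + cᵢ`. For fixed `N`, the
maximum of the first `N + 1` of them is attained at a measurably selected index, so along `v` it
equals `⟪F, v⟫ + β` with `F` bounded (hence in `Lˢ`) and `⟪F, y⟫ + β ≤ g y` for all `y`. Weak
convergence gives `∫ ⟪F, vₙ⟫ + β → ∫ ⟪F, v⟫ + β`, so this integral is at most
`liminf ∫ g(vₙ)`; monotone convergence in `N` then yields `∫ g(v)`.
The `liminf` is only meaningful because `∫ g(vₙ)` stays bounded: the growth bound reduces this to
boundedness of `vₙ` in `Lʳ`, which is the uniform boundedness principle applied to the functionals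
`f ↦ ∫ ⟪f, vₙ⟫` on `Lˢ`, whose norms dominate `‖vₙ‖ᵣ` (test against `‖vₙ‖ ^ (r - 2) • vₙ`).
-/

open Set MeasureTheory Filter
open scoped RealInnerProductSpace ENNReal

theorem exists_measurable_partialSups_eq {α δ : Type*} [MeasurableSpace α] [LinearOrder δ]
    [MeasurableSpace δ] [MeasurableSup₂ δ] [MeasurableEq δ] {f : ℕ → α → δ}
    (hf : ∀ i, Measurable (f i)) (N : ℕ) :
    ∃ σ : α → ℕ, Measurable σ ∧ ∀ x, σ x ≤ N ∧ partialSups f N x = f (σ x) x := by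
  classical
  have hex : ∀ x, ∃ i, i ≤ N ∧ partialSups f N x = f i x := fun x => by
    simpa only [Pi.partialSups_apply] using exists_partialSups_eq (f · x) N
  have hsup : Measurable (partialSups f N) := by
    rw [partialSups_apply]
    exact Finset.measurable_sup' _ fun i _ => hf i
  exact ⟨fun x => Nat.find (hex x), measurable_find hex fun i =>
    (MeasurableSet.const (i ≤ N)).inter (measurableSet_eq_fun hsup (hf i)),
    fun x => Nat.find_spec (hex x)⟩

theorem tendsto_partialSups_ciSup {a : ℕ → ℝ} (h : BddAbove (range a)) :
    Tendsto (partialSups a) atTop (nhds (⨆ i, a i)) := by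
  simpa only [ciSup_partialSups_eq h] using
    tendsto_atTop_ciSup (partialSups a).monotone (bddAbove_range_partialSups.2 h)

theorem Real.HolderConjugate.le_rpow_of_le_mul_rpow {s r : ℝ} (hsr : s.HolderConjugate r)
    {I K : ℝ} (hI : 0 ≤ I) (hK : 0 ≤ K) (h : I ≤ K * I ^ s⁻¹) : I ≤ K ^ r := by
  rcases hI.eq_or_lt with rfl | hI
  · exact Real.rpow_nonneg hK r
  have hsplit : I = I ^ r⁻¹ * I ^ s⁻¹ := by
    rw [← Real.rpow_add hI, add_comm, hsr.inv_add_inv_eq_one, Real.rpow_one]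
  have hroot : I ^ r⁻¹ ≤ K :=
    le_of_mul_le_mul_right (hsplit ▸ h : I ^ r⁻¹ * I ^ s⁻¹ ≤ K * I ^ s⁻¹)
      (Real.rpow_pos_of_pos hI _)
  calc I = (I ^ r⁻¹) ^ r := by
        rw [← Real.rpow_mul hI.le, inv_mul_cancel₀ hsr.symm.ne_zero, Real.rpow_one]
    _ ≤ K ^ r := Real.rpow_le_rpow (Real.rpow_nonneg hI.le _) hroot hsr.symm.nonneg

section

variable {Ω E : Type*} [MeasurableSpace Ω] {μ : Measure Ω} [NormedAddCommGroup E]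

section Growth

variable [IsFiniteMeasure μ] {g : E → ℝ} {C r : ℝ} {w : Ω → E}

theorem MeasureTheory.MemLp.integrable_norm_rpow_ofReal (hr : 0 ≤ r)
    (hw : MemLp w (ENNReal.ofReal r) μ) : Integrable (fun x => ‖w x‖ ^ r) μ := by
  simpa [hr] using hw.integrable_norm_rpow'

theorem MeasureTheory.MemLp.integrable_comp_of_le_rpow (hr : 0 ≤ r)
    (hw : MemLp w (ENNReal.ofReal r) μ) (hg : Continuous g) (hg0 : ∀ x, 0 ≤ g x)
    (hgC : ∀ x, g x ≤ C * (1 + ‖x‖ ^ r)) : Integrable (fun x => g (w x)) μ :=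
  (((integrable_const 1).add (hw.integrable_norm_rpow_ofReal hr)).const_mul C).mono'
    (hg.comp_aestronglyMeasurable hw.1)
    (ae_of_all _ fun x => by simpa [abs_of_nonneg (hg0 _)] using hgC (w x))

theorem MeasureTheory.MemLp.integral_comp_le_rpow (hr : 0 ≤ r)
    (hw : MemLp w (ENNReal.ofReal r) μ) (hg : Continuous g) (hg0 : ∀ x, 0 ≤ g x)
    (hgC : ∀ x, g x ≤ C * (1 + ‖x‖ ^ r)) :
    ∫ x, g (w x) ∂μ ≤ C * (μ.real univ + ∫ x, ‖w x‖ ^ r ∂μ) := by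
  have hint := hw.integrable_norm_rpow_ofReal hr
  calc ∫ x, g (w x) ∂μ ≤ ∫ x, C * (1 + ‖w x‖ ^ r) ∂μ :=
        integral_mono (hw.integrable_comp_of_le_rpow hr hg hg0 hgC)
          (((integrable_const 1).add hint).const_mul C) fun x => hgC (w x)
    _ = C * (μ.real univ + ∫ x, ‖w x‖ ^ r ∂μ) := by
      rw [integral_const_mul, integral_add (integrable_const _) hint]
      simp

end Growth

theorem tendsto_integral_partialSups_affine [NormedSpace ℝ E] [IsFiniteMeasure μ] {g : E → ℝ}
    {l : ℕ → StrongDual ℝ E} {c : ℕ → ℝ} (hle : ∀ i, ⇑(l i) + Function.const E (c i) ≤ g)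
    (hsup : ⨆ i, ⇑(l i) + Function.const E (c i) = g) {v : Ω → E} (hv : Integrable v μ)
    (hgv : Integrable (fun x => g (v x)) μ) :
    Tendsto (fun N => ∫ x, partialSups (fun i => ⇑(l i) + Function.const E (c i)) N (v x) ∂μ)
      atTop (nhds (∫ x, g (v x) ∂μ)) := by
  set A : ℕ → E → ℝ := fun i => ⇑(l i) + Function.const E (c i)
  have hA0 : Integrable (fun x => A 0 (v x)) μ :=
    ((l 0).integrable_comp hv).add (integrable_const _)
  refine integral_tendsto_of_tendsto_of_monotone (fun N => ?_) hgv
    (ae_of_all _ fun x _ _ hNM => (partialSups A).monotone hNM (v x)) (ae_of_all _ fun x => ?_)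
  · refine integrable_of_le_of_le ?_ (ae_of_all _ fun x => le_partialSups_of_le A N.zero_le (v x))
      (ae_of_all _ fun x => partialSups_le A N g (fun i _ => hle i) (v x)) hA0 hgv
    exact (Continuous.partialSups fun i _ => (l i).continuous.add continuous_const)
      |>.comp_aestronglyMeasurable hv.1
  · have hbdd : BddAbove (range fun i => A i (v x)) :=
      ⟨g (v x), forall_mem_range.2 fun i => hle i (v x)⟩
    simpa only [Pi.partialSups_apply, ← hsup, iSup_apply] using tendsto_partialSups_ciSup hbdd

variable [InnerProductSpace ℝ E]

theorem MeasureTheory.MemLp.integrable_inner {p q : ℝ≥0∞} [p.HolderConjugate q] {f w : Ω → E}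
    (hf : MemLp f p μ) (hw : MemLp w q μ) : Integrable (fun x => ⟪f x, w x⟫) μ :=
  memLp_one_iff_integrable.1 ((innerSL ℝ).memLp_of_bilin 1 hf hw)

theorem integral_norm_rpow_le_of_integral_inner_le {s r : ℝ} (hsr : s.HolderConjugate r)
    {w : Ω → E} (hw : MemLp w (ENNReal.ofReal r) μ) {K : ℝ} (hK : 0 ≤ K)
    (h : ∀ f : Ω → E, MemLp f (ENNReal.ofReal s) μ →
      ∫ x, ⟪f x, w x⟫ ∂μ ≤ K * (eLpNorm f (ENNReal.ofReal s) μ).toReal) :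
    ∫ x, ‖w x‖ ^ r ∂μ ≤ K ^ r := by
  have hr1 : r - 1 ≠ 0 := hsr.symm.sub_one_ne_zero
  set f : Ω → E := fun x => ‖w x‖ ^ (r - 2) • w x
  have hf_norm : ∀ x, ‖f x‖ = ‖w x‖ ^ (r - 1) := fun x => by
    rw [norm_smul, Real.norm_of_nonneg (by positivity), ← Real.rpow_add_one' (norm_nonneg _)
      (by convert hr1 using 1; ring)]
    ring_nf
  have hf_inner : ∀ x, ⟪f x, w x⟫ = ‖w x‖ ^ r := fun x => by
    rw [real_inner_smul_left, real_inner_self_eq_norm_sq, ← Real.rpow_two,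
      ← Real.rpow_add' (norm_nonneg _) (by rw [sub_add_cancel]; exact hsr.symm.ne_zero),
      sub_add_cancel]
  have hf : MemLp f (ENNReal.ofReal s) μ := by
    have hmeas : AEStronglyMeasurable f μ :=
      (hw.1.norm.aemeasurable.pow_const (r - 2)).aestronglyMeasurable.smul hw.1
    refine (memLp_norm_iff hmeas).1 ?_
    have := hw.norm_rpow_div (ENNReal.ofReal (r - 1))
    rw [← ENNReal.ofReal_div_of_pos hsr.symm.sub_one_pos, ← hsr.symm.conjugate_eq,
      ENNReal.toReal_ofReal hsr.symm.sub_one_pos.le] at this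
    simpa only [hf_norm] using this
  have hf_eLpNorm : (eLpNorm f (ENNReal.ofReal s) μ).toReal = (∫ x, ‖w x‖ ^ r ∂μ) ^ s⁻¹ := by
    rw [hf.eLpNorm_eq_integral_rpow_norm (by simpa using hsr.pos) ENNReal.ofReal_ne_top,
      ENNReal.toReal_ofReal hsr.nonneg, ENNReal.toReal_ofReal (by positivity)]
    simp only [hf_norm, ← Real.rpow_mul (norm_nonneg _), hsr.symm.sub_one_mul_conj]
  refine hsr.le_rpow_of_le_mul_rpow (integral_nonneg fun x => by positivity) hK ?_
  simpa only [hf_inner, hf_eLpNorm] using h f hf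

theorem bddAbove_integral_norm_rpow_of_bddAbove_integral_inner [CompleteSpace E] {s r : ℝ}
    (hsr : s.HolderConjugate r) {w : ℕ → Ω → E} (hw : ∀ n, MemLp (w n) (ENNReal.ofReal r) μ)
    (h : ∀ f : Ω → E, MemLp f (ENNReal.ofReal s) μ →
      BddAbove (range fun n => |∫ x, ⟪f x, w n x⟫ ∂μ|)) :
    BddAbove (range fun n => ∫ x, ‖w n x‖ ^ r ∂μ) := by
  have := hsr.ennrealOfReal
  have : Fact (1 ≤ ENNReal.ofReal s) := ⟨by simpa using hsr.lt.le⟩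
  have : Fact (1 ≤ ENNReal.ofReal r) := ⟨by simpa using hsr.symm.lt.le⟩
  let T : ℕ → StrongDual ℝ (Lp E (ENNReal.ofReal s) μ) := fun n =>
    ((innerSL ℝ).lpPairing μ _ (ENNReal.ofReal r)).flip ((hw n).toLp (w n))
  have hT : ∀ n f (hf : MemLp f (ENNReal.ofReal s) μ), T n (hf.toLp f) = ∫ x, ⟪f x, w n x⟫ ∂μ :=
    fun n f hf => by
      simp only [T, ContinuousLinearMap.flip_apply, ContinuousLinearMap.lpPairing_eq_integral]
      refine integral_congr_ae ?_
      filter_upwards [hf.coeFn_toLp, (hw n).coeFn_toLp] with x hfx hwx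
      rw [hfx, hwx, innerSL_apply_apply]
  obtain ⟨C, hC⟩ := banach_steinhaus (g := T) fun φ => by
    obtain ⟨C, hC⟩ := h φ (Lp.memLp φ)
    refine ⟨C, fun n => ?_⟩
    simpa [← hT n φ (Lp.memLp φ)] using hC (mem_range_self n)
  have hC0 : 0 ≤ C := (norm_nonneg _).trans (hC 0)
  refine ⟨C ^ r, forall_mem_range.2 fun n =>
    integral_norm_rpow_le_of_integral_inner_le hsr (hw n) hC0 fun f hf => ?_⟩
  calc ∫ x, ⟪f x, w n x⟫ ∂μ = T n (hf.toLp f) := (hT n f hf).symm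
    _ ≤ ‖T n‖ * ‖hf.toLp f‖ := (le_abs_self _).trans ((T n).le_opNorm _)
    _ ≤ C * (eLpNorm f (ENNReal.ofReal s) μ).toReal := by
      rw [Lp.norm_toLp]; gcongr; exact hC n

theorem integral_inner_add_le_liminf {p q : ℝ≥0∞} [p.HolderConjugate q] {g : E → ℝ}
    {F : Ω → E} {β : Ω → ℝ} {v : Ω → E} {w : ℕ → Ω → E}
    (hF : MemLp F p μ) (hβ : Integrable β μ) (hFβ : ∀ x y, ⟪F x, y⟫ + β x ≤ g y)
    (hv : MemLp v q μ) (hw : ∀ n, MemLp (w n) q μ)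
    (hgw : ∀ n, Integrable (fun x => g (w n x)) μ)
    (hcob : IsCoboundedUnder (· ≥ ·) atTop fun n => ∫ x, g (w n x) ∂μ)
    (hlim : Tendsto (fun n => ∫ x, ⟪F x, w n x⟫ ∂μ) atTop (nhds (∫ x, ⟪F x, v x⟫ ∂μ))) :
    ∫ x, (⟪F x, v x⟫ + β x) ∂μ ≤ liminf (fun n => ∫ x, g (w n x) ∂μ) atTop := by
  have hlim' : Tendsto (fun n => ∫ x, (⟪F x, w n x⟫ + β x) ∂μ) atTop
      (nhds (∫ x, (⟪F x, v x⟫ + β x) ∂μ)) := by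
    rw [integral_add (hF.integrable_inner hv) hβ]
    exact (hlim.add_const _).congr fun n => (integral_add (hF.integrable_inner (hw n)) hβ).symm
  rw [← hlim'.liminf_eq]
  exact liminf_le_liminf (Eventually.of_forall fun n =>
    integral_mono ((hF.integrable_inner (hw n)).add hβ) (hgw n) fun x => hFβ x (w n x))
    hlim'.isBoundedUnder_ge hcob

theorem integral_partialSups_affine_le_liminf [IsFiniteMeasure μ] [CompleteSpace E]
    [MeasurableSpace E] [BorelSpace E] [SecondCountableTopology E]
    {p q : ℝ≥0∞} [p.HolderConjugate q] {g : E → ℝ}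
    {l : ℕ → StrongDual ℝ E} {c : ℕ → ℝ} (hle : ∀ i, ⇑(l i) + Function.const E (c i) ≤ g)
    (N : ℕ) {v : Ω → E} {w : ℕ → Ω → E} (hv : MemLp v q μ) (hw : ∀ n, MemLp (w n) q μ)
    (hgw : ∀ n, Integrable (fun x => g (w n x)) μ)
    (hcob : IsCoboundedUnder (· ≥ ·) atTop fun n => ∫ x, g (w n x) ∂μ)
    (hweak : ∀ F : Ω → E, MemLp F p μ →
      Tendsto (fun n => ∫ x, ⟪F x, w n x⟫ ∂μ) atTop (nhds (∫ x, ⟪F x, v x⟫ ∂μ))) :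
    ∫ x, partialSups (fun i => ⇑(l i) + Function.const E (c i)) N (v x) ∂μ ≤
      liminf (fun n => ∫ x, g (w n x) ∂μ) atTop := by
  set A : ℕ → E → ℝ := fun i => ⇑(l i) + Function.const E (c i)
  obtain ⟨σ, hσ, hσN⟩ := exists_measurable_partialSups_eq
    (fun i => ((l i).continuous.add continuous_const).measurable) N (f := A)
  have hσv : AEMeasurable (fun x => σ (v x)) μ := hσ.comp_aemeasurable hv.1.aemeasurable
  set F : Ω → E := fun x => (InnerProductSpace.toDual ℝ E).symm (l (σ (v x)))
  set β : Ω → ℝ := fun x => c (σ (v x))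
  have hσ_mem : ∀ x, σ (v x) ∈ Finset.range (N + 1) := fun x =>
    Finset.mem_range.2 (Nat.lt_succ_of_le (hσN (v x)).1)
  have hF : MemLp F p μ := by
    refine .of_bound ((measurable_from_nat (f := fun i => (InnerProductSpace.toDual ℝ E).symm
      (l i))).comp_aemeasurable hσv).aestronglyMeasurable
      (∑ i ∈ Finset.range (N + 1), ‖l i‖) (ae_of_all _ fun x => ?_)
    rw [LinearIsometryEquiv.norm_map]
    exact Finset.single_le_sum (fun i _ => norm_nonneg (l i)) (hσ_mem x)
  have hβ : Integrable β μ := by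
    refine memLp_one_iff_integrable.1 <| .of_bound
      ((measurable_from_nat (f := c)).comp_aemeasurable hσv).aestronglyMeasurable
      (∑ i ∈ Finset.range (N + 1), ‖c i‖) (ae_of_all _ fun x => ?_)
    exact Finset.single_le_sum (fun i _ => norm_nonneg (c i)) (hσ_mem x)
  have hFβ : ∀ x y, ⟪F x, y⟫ + β x ≤ g y := fun x y => by
    simpa [F, β, InnerProductSpace.toDual_symm_apply] using hle (σ (v x)) y
  have hsel : ∀ x, ⟪F x, v x⟫ + β x = partialSups A N (v x) := fun x => by
    simp [F, β, A, InnerProductSpace.toDual_symm_apply, (hσN (v x)).2]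
  simpa only [hsel] using integral_inner_add_le_liminf hF hβ hFβ hv hw hgw hcob (hweak F hF)

end

theorem stmt_9_general {Ω : Type*} [MeasurableSpace Ω] (μ : Measure Ω) [IsFiniteMeasure μ]
    (d : ℕ) (r s : ℝ) (hr : 2 ≤ r) (hs : s = r / (r - 1))
    (C : ℝ) (hC : 0 < C)
    (g : EuclideanSpace ℝ (Fin d) → ℝ)
    (hgconv : ConvexOn ℝ univ g) (hgcont : Continuous g)
    (hgnn : ∀ x : EuclideanSpace ℝ (Fin d), 0 ≤ g x)
    (hgb : ∀ x : EuclideanSpace ℝ (Fin d), g x ≤ C * (1 + ‖x‖ ^ r))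
    (v : Ω → EuclideanSpace ℝ (Fin d)) (vn : ℕ → Ω → EuclideanSpace ℝ (Fin d))
    (hv : MemLp v (ENNReal.ofReal r) μ)
    (hvn : ∀ n, MemLp (vn n) (ENNReal.ofReal r) μ)
    (hweak : ∀ f : Ω → EuclideanSpace ℝ (Fin d), MemLp f (ENNReal.ofReal s) μ →
      Tendsto (fun n => ∫ x, ⟪f x, vn n x⟫ ∂μ) atTop (nhds (∫ x, ⟪f x, v x⟫ ∂μ))) :
    (∫ x, g (v x) ∂μ) ≤ liminf (fun n => ∫ x, g (vn n x) ∂μ) atTop := by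
  have hsr : s.HolderConjugate r :=
    ((Real.holderConjugate_iff_eq_conjExponent (by linarith)).2 hs).symm
  have := hsr.ennrealOfReal
  have hr0 : 0 ≤ r := hsr.symm.nonneg
  obtain ⟨B, hB⟩ := bddAbove_integral_norm_rpow_of_bddAbove_integral_inner hsr hvn
    fun f hf => (hweak f hf).abs.bddAbove_range
  have hcob : IsCoboundedUnder (· ≥ ·) atTop fun n => ∫ x, g (vn n x) ∂μ :=
    isCoboundedUnder_ge_of_le atTop fun n =>
      ((hvn n).integral_comp_le_rpow hr0 hgcont hgnn hgb).trans <|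
        mul_le_mul_of_nonneg_left (add_le_add_right (hB (mem_range_self n)) _) hC.le
  obtain ⟨l, c, hle, hsup⟩ := hgconv.real_univ_sSup_of_nat_affine_eq hgcont.lowerSemicontinuous
  exact le_of_tendsto' (tendsto_integral_partialSups_affine hle hsup
      (hv.integrable (by simpa using hsr.symm.lt.le))
      (hv.integrable_comp_of_le_rpow hr0 hgcont hgnn hgb))
    fun N => integral_partialSups_affine_le_liminf hle N hv hvn
      (fun n => (hvn n).integrable_comp_of_le_rpow hr0 hgcont hgnn hgb) hcob hweak

/-- weak lower semicontinuity of the convex integral functional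
v ↦ ∫ g(v) dμ along sequences converging weakly in Lʳ(μ; ℝᵈ). -/
theorem stmt_9 {Ω : Type*} [MeasurableSpace Ω] (μ : Measure Ω) [IsFiniteMeasure μ]
    (d : ℕ) (hd : 1 ≤ d) (r s : ℝ) (hr : 2 ≤ r) (hs : s = r / (r - 1))
    (C : ℝ) (hC : 0 < C)
    (g : EuclideanSpace ℝ (Fin d) → ℝ)
    (hgconv : ConvexOn ℝ univ g) (hgcont : Continuous g)
    (hgnn : ∀ x : EuclideanSpace ℝ (Fin d), 0 ≤ g x)
    (hgb : ∀ x : EuclideanSpace ℝ (Fin d), g x ≤ C * (1 + ‖x‖ ^ r))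
    (v : Ω → EuclideanSpace ℝ (Fin d)) (vn : ℕ → Ω → EuclideanSpace ℝ (Fin d))
    (hv : MemLp v (ENNReal.ofReal r) μ)
    (hvn : ∀ n, MemLp (vn n) (ENNReal.ofReal r) μ)
    (hweak : ∀ f : Ω → EuclideanSpace ℝ (Fin d), MemLp f (ENNReal.ofReal s) μ →
      Tendsto (fun n => ∫ x, ⟪f x, vn n x⟫ ∂μ) atTop (nhds (∫ x, ⟪f x, v x⟫ ∂μ))) :
    (∫ x, g (v x) ∂μ) ≤ liminf (fun n => ∫ x, g (vn n x) ∂μ) atTop :=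
  stmt_9_general μ d r s hr hs C hC g hgconv hgcont hgnn hgb v vn hv hvn hweak
end

section
/- Let (Ω, μ) be a finite measure space, d ≥ 1, and r ≥ 2. Suppose φ₂(a) ≤ C(1 + a^{(r−2)/2}) for all a ≥ 1 and some constant C > 0. Let w, φ ∈ Lʳ(μ; ℝᵈ) and assume φ(x) = 0 for μ-almost every x with ‖w(x)‖ ≥ 1. Then lim_{δ→0⁺} (1/δ)·∫_Ω (Ψ(‖w + δφ‖²) − Ψ(‖w‖²)) dμ = ∫_Ω φ₁(‖w‖²)·(w·φ) dμ, where the right-hand integrand vanishes wherever φ does. -/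
/-!
`Ψ` is half the primitive of the density equal to `φ₁` on `[0, 1]` and to `φ₂` on `(1, ∞)`.
Where `‖w‖ < 1` the difference quotients converge pointwise by the chain rule, since `Ψ` is
differentiable below `1` with derivative `φ₁ / 2`; where `‖w‖ ≥ 1` they vanish because `φ = 0`.
For `δ ≤ 1` the growth bound on `φ₂` dominates them by `(M + C) g² + C g^r`, where `M` bounds
`|φ₁|` on `[0, 1]` and `g = ‖w‖ + ‖φ‖ ∈ Lʳ`, so dominated convergence concludes.
-/

open Set MeasureTheory Filter intervalIntegral Topology
open scoped RealInnerProductSpace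

/-- Clamping the argument of `φ₁` to `[0, 1]` makes the lower branch continuous on all of `ℝ`
without changing anything on `[0, ∞)`. -/
noncomputable def gluedDensity (φ₁ φ₂ : ℝ → ℝ) (t : ℝ) : ℝ :=
  if t ≤ 1 then IccExtend zero_le_one ((Icc 0 1).domRestrict φ₁) t else φ₂ t

noncomputable def gluedPotential (φ₁ φ₂ : ℝ → ℝ) (a : ℝ) : ℝ :=
  (1 / 2) * ∫ t in (1 : ℝ)..a, gluedDensity φ₁ φ₂ t

section GluedPotential

variable {φ₁ φ₂ : ℝ → ℝ}

lemma gluedDensity_of_le {t : ℝ} (ht : t ≤ 1) :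
    gluedDensity φ₁ φ₂ t = IccExtend zero_le_one ((Icc 0 1).domRestrict φ₁) t :=
  if_pos ht

lemma gluedDensity_of_mem_Icc {t : ℝ} (ht : t ∈ Icc (0 : ℝ) 1) :
    gluedDensity φ₁ φ₂ t = φ₁ t := by
  rw [gluedDensity_of_le ht.2, IccExtend_of_mem _ _ ht, domRestrict_apply]

lemma gluedDensity_of_one_lt {t : ℝ} (ht : 1 < t) : gluedDensity φ₁ φ₂ t = φ₂ t :=
  if_neg ht.not_ge

lemma continuous_IccExtend_domRestrict (hφ₁ : ContinuousOn φ₁ (Icc 0 1)) :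
    Continuous (IccExtend zero_le_one ((Icc (0 : ℝ) 1).domRestrict φ₁)) :=
  hφ₁.domRestrict.Icc_extend'

lemma intervalIntegrable_gluedDensity_one (hφ₁ : ContinuousOn φ₁ (Icc 0 1))
    (hφ₂ : ContinuousOn φ₂ (Ici 1)) (b : ℝ) :
    IntervalIntegrable (gluedDensity φ₁ φ₂) volume 1 b := by
  rcases le_or_gt b 1 with hb | hb
  · refine ((continuous_IccExtend_domRestrict hφ₁).intervalIntegrable 1 b).congr fun t ht => ?_
    rw [uIoc_of_ge hb] at ht
    exact (gluedDensity_of_le ht.2).symm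
  · refine ((hφ₂.mono ?_).intervalIntegrable).congr fun t ht => ?_
    · rw [uIcc_of_le hb.le]
      exact Icc_subset_Ici_self
    · rw [uIoc_of_le hb.le] at ht
      exact (gluedDensity_of_one_lt ht.1).symm

lemma intervalIntegrable_gluedDensity (hφ₁ : ContinuousOn φ₁ (Icc 0 1))
    (hφ₂ : ContinuousOn φ₂ (Ici 1)) (a b : ℝ) :
    IntervalIntegrable (gluedDensity φ₁ φ₂) volume a b :=
  (intervalIntegrable_gluedDensity_one hφ₁ hφ₂ a).symm.trans
    (intervalIntegrable_gluedDensity_one hφ₁ hφ₂ b)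

lemma continuous_gluedPotential (hφ₁ : ContinuousOn φ₁ (Icc 0 1))
    (hφ₂ : ContinuousOn φ₂ (Ici 1)) : Continuous (gluedPotential φ₁ φ₂) :=
  continuous_const.mul (continuous_primitive (intervalIntegrable_gluedDensity hφ₁ hφ₂) 1)

lemma eq_gluedPotential {Ψ : ℝ → ℝ}
    (hΨ : ∀ a : ℝ, 0 ≤ a →
      Ψ a = if a ≤ 1 then (1/2) * ∫ t in (1:ℝ)..a, φ₁ t
            else (1/2) * ∫ t in (1:ℝ)..a, φ₂ t)
    {a : ℝ} (ha : 0 ≤ a) : Ψ a = gluedPotential φ₁ φ₂ a := by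
  rw [hΨ a ha, gluedPotential]
  split_ifs with h
  · refine congrArg _ (integral_congr fun t ht => ?_)
    rw [uIcc_of_ge h] at ht
    exact (gluedDensity_of_mem_Icc ⟨ha.trans ht.1, ht.2⟩).symm
  · refine congrArg _ (integral_congr_ae (ae_of_all _ fun t ht => ?_))
    rw [uIoc_of_le (not_le.mp h).le] at ht
    exact (gluedDensity_of_one_lt ht.1).symm

lemma hasDerivAt_gluedPotential (hφ₁ : ContinuousOn φ₁ (Icc 0 1)) {a : ℝ} (ha : a < 1) :
    HasDerivAt (gluedPotential φ₁ φ₂)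
      ((1 / 2) * IccExtend zero_le_one ((Icc 0 1).domRestrict φ₁) a) a := by
  have hcont := continuous_IccExtend_domRestrict hφ₁
  have hprim := (integral_hasDerivAt_right (hcont.intervalIntegrable 1 a)
    hcont.aestronglyMeasurable.stronglyMeasurableAtFilter hcont.continuousAt).const_mul (1 / 2)
  refine hprim.congr_of_eventuallyEq ?_
  filter_upwards [eventually_le_nhds ha] with b hb
  refine congrArg _ (integral_congr fun t ht => ?_)
  rw [uIcc_of_ge hb] at ht
  exact gluedDensity_of_le ht.2

lemma norm_gluedDensity_le {M C r T t : ℝ} (hM : ∀ t ∈ Icc (0 : ℝ) 1, ‖φ₁ t‖ ≤ M)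
    (hφ₂nn : ∀ a ∈ Ici (1 : ℝ), 0 ≤ φ₂ a)
    (hbound : ∀ a : ℝ, 1 ≤ a → φ₂ a ≤ C * (1 + a ^ ((r - 2) / 2)))
    (hC : 0 ≤ C) (hr : 2 ≤ r) (hT : 0 ≤ T) (ht : t ≤ T) :
    ‖gluedDensity φ₁ φ₂ t‖ ≤ M + C * (1 + T ^ ((r - 2) / 2)) := by
  have hM0 : 0 ≤ M := (norm_nonneg _).trans (hM 0 ⟨le_rfl, zero_le_one⟩)
  have hTpow : 0 ≤ T ^ ((r - 2) / 2) := Real.rpow_nonneg hT _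
  rcases le_or_gt t 1 with h | h
  · rw [gluedDensity_of_le h, IccExtend_apply]
    exact le_add_of_le_of_nonneg (hM _ (projIcc 0 1 zero_le_one t).2) (by positivity)
  · rw [gluedDensity_of_one_lt h, Real.norm_of_nonneg (hφ₂nn t h.le)]
    calc φ₂ t ≤ C * (1 + t ^ ((r - 2) / 2)) := hbound t h.le
      _ ≤ C * (1 + T ^ ((r - 2) / 2)) := by gcongr
      _ ≤ M + C * (1 + T ^ ((r - 2) / 2)) := le_add_of_nonneg_left hM0

lemma abs_gluedPotential_sub_le {M C r T p q : ℝ} (hφ₁ : ContinuousOn φ₁ (Icc 0 1))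
    (hφ₂ : ContinuousOn φ₂ (Ici 1)) (hM : ∀ t ∈ Icc (0 : ℝ) 1, ‖φ₁ t‖ ≤ M)
    (hφ₂nn : ∀ a ∈ Ici (1 : ℝ), 0 ≤ φ₂ a)
    (hbound : ∀ a : ℝ, 1 ≤ a → φ₂ a ≤ C * (1 + a ^ ((r - 2) / 2)))
    (hC : 0 ≤ C) (hr : 2 ≤ r) (hT : 0 ≤ T) (hp : p ≤ T) (hq : q ≤ T) :
    |gluedPotential φ₁ φ₂ p - gluedPotential φ₁ φ₂ q| ≤
      (M + C * (1 + T ^ ((r - 2) / 2))) / 2 * |p - q| := by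
  have hsub : gluedPotential φ₁ φ₂ p - gluedPotential φ₁ φ₂ q =
      (1 / 2) * ∫ t in q..p, gluedDensity φ₁ φ₂ t := by
    rw [gluedPotential, gluedPotential, ← mul_sub, integral_interval_sub_left
      (intervalIntegrable_gluedDensity hφ₁ hφ₂ 1 p) (intervalIntegrable_gluedDensity hφ₁ hφ₂ 1 q)]
  have hint : ‖∫ t in q..p, gluedDensity φ₁ φ₂ t‖ ≤ (M + C * (1 + T ^ ((r - 2) / 2))) * |p - q| :=
    norm_integral_le_of_norm_le_const fun t ht =>
      norm_gluedDensity_le hM hφ₂nn hbound hC hr hT (ht.2.trans (max_le hq hp))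
  rw [hsub, abs_mul, abs_of_pos one_half_pos, ← Real.norm_eq_abs]
  linarith

end GluedPotential

section Slope

variable {E : Type*} {φ₁ φ₂ : ℝ → ℝ}

lemma abs_norm_add_smul_sq_sub_le [SeminormedAddCommGroup E] [NormedSpace ℝ E] (v u : E)
    {δ : ℝ} (hδ : 0 ≤ δ) (hδ1 : δ ≤ 1) :
    |‖v + δ • u‖ ^ 2 - ‖v‖ ^ 2| ≤ δ * (2 * ‖u‖ * (‖v‖ + ‖u‖)) := by
  have hdiff : |‖v + δ • u‖ - ‖v‖| ≤ δ * ‖u‖ := by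
    simpa [norm_smul, abs_of_nonneg hδ] using abs_norm_sub_norm_le (v + δ • u) v
  have hsum : ‖v + δ • u‖ + ‖v‖ ≤ 2 * (‖v‖ + ‖u‖) := by
    have := norm_add_le v (δ • u)
    rw [norm_smul, Real.norm_of_nonneg hδ] at this
    nlinarith [norm_nonneg u, norm_nonneg v]
  rw [sq_sub_sq, abs_mul, abs_of_nonneg (by positivity)]
  calc (‖v + δ • u‖ + ‖v‖) * |‖v + δ • u‖ - ‖v‖| ≤ 2 * (‖v‖ + ‖u‖) * (δ * ‖u‖) :=
        mul_le_mul hsum hdiff (abs_nonneg _) (by positivity)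
    _ = δ * (2 * ‖u‖ * (‖v‖ + ‖u‖)) := by ring

lemma abs_slope_gluedPotential_le [SeminormedAddCommGroup E] [NormedSpace ℝ E] {M C r : ℝ}
    (hφ₁ : ContinuousOn φ₁ (Icc 0 1)) (hφ₂ : ContinuousOn φ₂ (Ici 1))
    (hM : ∀ t ∈ Icc (0 : ℝ) 1, ‖φ₁ t‖ ≤ M) (hφ₂nn : ∀ a ∈ Ici (1 : ℝ), 0 ≤ φ₂ a)
    (hbound : ∀ a : ℝ, 1 ≤ a → φ₂ a ≤ C * (1 + a ^ ((r - 2) / 2)))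
    (hC : 0 ≤ C) (hr : 2 ≤ r) (v u : E) {δ : ℝ} (hδ : 0 < δ) (hδ1 : δ ≤ 1) :
    |(1 / δ) * (gluedPotential φ₁ φ₂ (‖v + δ • u‖ ^ 2) - gluedPotential φ₁ φ₂ (‖v‖ ^ 2))| ≤
      (M + C) * (‖v‖ + ‖u‖) ^ 2 + C * (‖v‖ + ‖u‖) ^ r := by
  set g := ‖v‖ + ‖u‖
  have hg : 0 ≤ g := by positivity
  have hvδ : ‖v + δ • u‖ ^ 2 ≤ g ^ 2 := by
    have := norm_add_le v (δ • u)
    rw [norm_smul, Real.norm_of_nonneg hδ.le] at this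
    gcongr
    nlinarith [norm_nonneg u]
  have hv : ‖v‖ ^ 2 ≤ g ^ 2 := by gcongr; linarith [norm_nonneg u]
  have hΔ := abs_gluedPotential_sub_le hφ₁ hφ₂ hM hφ₂nn hbound hC hr (sq_nonneg g) hvδ hv
  have hsq := abs_norm_add_smul_sq_sub_le v u hδ.le hδ1
  have hK : 0 ≤ M + C * (1 + (g ^ 2) ^ ((r - 2) / 2)) := (norm_nonneg _).trans
    (norm_gluedDensity_le (t := 0) hM hφ₂nn hbound hC hr (sq_nonneg g) (sq_nonneg g))
  have hpow : (g ^ 2) ^ ((r - 2) / 2) * g ^ 2 = g ^ r := by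
    rw [← Real.rpow_natCast g 2, ← Real.rpow_mul hg, ← Real.rpow_add' hg (by linarith)]
    congr 1
    push_cast
    ring
  rw [abs_mul, abs_of_pos (one_div_pos.mpr hδ)]
  calc 1 / δ * |gluedPotential φ₁ φ₂ (‖v + δ • u‖ ^ 2) - gluedPotential φ₁ φ₂ (‖v‖ ^ 2)|
      ≤ 1 / δ * ((M + C * (1 + (g ^ 2) ^ ((r - 2) / 2))) / 2 * (δ * (2 * ‖u‖ * g))) := by
        gcongr
        exact hΔ.trans (by gcongr)
    _ = (M + C * (1 + (g ^ 2) ^ ((r - 2) / 2))) * ‖u‖ * g := by field_simp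
    _ ≤ (M + C * (1 + (g ^ 2) ^ ((r - 2) / 2))) * g * g := by
        gcongr
        linarith [norm_nonneg v]
    _ = (M + C) * g ^ 2 + C * g ^ r := by rw [← hpow]; ring

lemma tendsto_slope_gluedPotential [NormedAddCommGroup E] [InnerProductSpace ℝ E]
    (hφ₁ : ContinuousOn φ₁ (Icc 0 1)) (v u : E) (hv : ‖v‖ < 1) :
    Tendsto (fun δ : ℝ =>
        (1 / δ) * (gluedPotential φ₁ φ₂ (‖v + δ • u‖ ^ 2) - gluedPotential φ₁ φ₂ (‖v‖ ^ 2)))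
      (𝓝[>] 0) (𝓝 (φ₁ (‖v‖ ^ 2) * ⟪v, u⟫)) := by
  have hv2 : ‖v‖ ^ 2 ∈ Icc (0 : ℝ) 1 := ⟨sq_nonneg _, by nlinarith [norm_nonneg v]⟩
  have hcurve : HasDerivAt (fun δ : ℝ => ‖v + δ • u‖ ^ 2) (2 * ⟪v, u⟫) 0 := by
    simpa using (((hasDerivAt_id (0 : ℝ)).smul_const u).const_add v).norm_sq
  have hlt : ‖v + (0 : ℝ) • u‖ ^ 2 < 1 := by simpa using hv
  have hslope :=
    ((hasDerivAt_gluedPotential (φ₂ := φ₂) hφ₁ hlt).comp 0 hcurve).tendsto_slope_zero_right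
  simp only [zero_smul, add_zero, zero_add, smul_eq_mul, Function.comp_def,
    IccExtend_of_mem _ _ hv2, domRestrict_apply] at hslope
  convert hslope using 2 with δ
  · rw [one_div]
  · ring

lemma MeasureTheory.MemLp.integrable_rpow_of_le {Ω : Type*} [MeasurableSpace Ω] {μ : Measure Ω}
    [IsFiniteMeasure μ] {f : Ω → ℝ} {p r : ℝ} (hf : MemLp f (ENNReal.ofReal r) μ)
    (hf0 : 0 ≤ f) (hp : 0 ≤ p) (hpr : p ≤ r) : Integrable (fun x => f x ^ p) μ := by
  have hr : Integrable (fun x => ‖f x‖ ^ r) μ := by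
    simpa [ENNReal.toReal_ofReal (hp.trans hpr)] using hf.integrable_norm_rpow'
  simpa [Real.norm_of_nonneg (hf0 _)] using
    integrable_norm_rpow_of_le hf.1 hp (hp.trans hpr) hpr hr

theorem tendsto_slope_integral_gluedPotential {Ω : Type*} [MeasurableSpace Ω] {μ : Measure Ω}
    [IsFiniteMeasure μ] [NormedAddCommGroup E] [InnerProductSpace ℝ E] {C r : ℝ}
    (hr : 2 ≤ r) (hC : 0 ≤ C) (hφ₁ : ContinuousOn φ₁ (Icc 0 1)) (hφ₂ : ContinuousOn φ₂ (Ici 1))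
    (hφ₂nn : ∀ a ∈ Ici (1 : ℝ), 0 ≤ φ₂ a)
    (hbound : ∀ a : ℝ, 1 ≤ a → φ₂ a ≤ C * (1 + a ^ ((r - 2) / 2)))
    {w φ : Ω → E} (hw : MemLp w (ENNReal.ofReal r) μ) (hφ : MemLp φ (ENNReal.ofReal r) μ)
    (hsupp : ∀ᵐ x ∂μ, 1 ≤ ‖w x‖ → φ x = 0) :
    Tendsto (fun δ : ℝ => (1 / δ) *
        ∫ x, (gluedPotential φ₁ φ₂ (‖w x + δ • φ x‖ ^ 2) - gluedPotential φ₁ φ₂ (‖w x‖ ^ 2)) ∂μ)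
      (𝓝[>] 0) (𝓝 (∫ x, φ₁ (‖w x‖ ^ 2) * ⟪w x, φ x⟫ ∂μ)) := by
  obtain ⟨M, hM⟩ := isCompact_Icc.exists_bound_of_continuousOn hφ₁
  have hG := continuous_gluedPotential hφ₁ hφ₂
  set g : Ω → ℝ := fun x => ‖w x‖ + ‖φ x‖
  have hg : MemLp g (ENNReal.ofReal r) μ := hw.norm.add hφ.norm
  have hg0 : 0 ≤ g := fun x => by positivity
  have hdom : Integrable (fun x => (M + C) * g x ^ 2 + C * g x ^ r) μ := by
    have h2 := hg.integrable_rpow_of_le hg0 zero_le_two hr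
    simp only [Real.rpow_two] at h2
    exact (h2.const_mul _).add ((hg.integrable_rpow_of_le hg0 (by linarith) le_rfl).const_mul _)
  simp_rw [← MeasureTheory.integral_const_mul]
  refine tendsto_integral_filter_of_dominated_convergence _ (Eventually.of_forall fun δ => ?_)
    ?_ hdom ?_
  · exact ((hG.comp_aestronglyMeasurable ((hw.1.add (hφ.1.const_smul δ)).norm.pow 2)).sub
      (hG.comp_aestronglyMeasurable (hw.1.norm.pow 2))).const_mul _
  · filter_upwards [Ioc_mem_nhdsGT one_pos] with δ hδ
    exact ae_of_all _ fun x => (Real.norm_eq_abs _).trans_le <|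
      abs_slope_gluedPotential_le hφ₁ hφ₂ hM hφ₂nn hbound hC hr (w x) (φ x) hδ.1 hδ.2
  · filter_upwards [hsupp] with x hx
    rcases lt_or_ge ‖w x‖ 1 with hlt | hge
    · exact tendsto_slope_gluedPotential hφ₁ (w x) (φ x) hlt
    · simp [hx hge]

end Slope

theorem stmt_14_general {Ω : Type*} [MeasurableSpace Ω] (μ : Measure Ω) [IsFiniteMeasure μ]
    (d : ℕ) (r : ℝ) (hr : 2 ≤ r) (C : ℝ) (hC : 0 < C)
    (φ₁ φ₂ : ℝ → ℝ)
    (hφ₁c : ContinuousOn φ₁ (Icc 0 1)) (hφ₂c : ContinuousOn φ₂ (Ici 1))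
    (hφ₂nn : ∀ a ∈ Ici (1:ℝ), 0 ≤ φ₂ a)
    (hbound : ∀ a : ℝ, 1 ≤ a → φ₂ a ≤ C * (1 + a ^ ((r - 2) / 2)))
    (Ψ : ℝ → ℝ)
    (hΨ : ∀ a : ℝ, 0 ≤ a →
      Ψ a = if a ≤ 1 then (1/2) * ∫ t in (1:ℝ)..a, φ₁ t
            else (1/2) * ∫ t in (1:ℝ)..a, φ₂ t)
    (w φ : Ω → EuclideanSpace ℝ (Fin d))
    (hw : MemLp w (ENNReal.ofReal r) μ) (hφ : MemLp φ (ENNReal.ofReal r) μ)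
    (hsupp : ∀ᵐ x ∂μ, 1 ≤ ‖w x‖ → φ x = 0) :
    Tendsto (fun δ : ℝ =>
        (1 / δ) * ∫ x, (Ψ (‖w x + δ • φ x‖ ^ 2) - Ψ (‖w x‖ ^ 2)) ∂μ)
      (nhdsWithin 0 (Ioi 0))
      (nhds (∫ x, φ₁ (‖w x‖ ^ 2) * ⟪w x, φ x⟫ ∂μ)) := by
  have hΨG : ∀ v : EuclideanSpace ℝ (Fin d), Ψ (‖v‖ ^ 2) = gluedPotential φ₁ φ₂ (‖v‖ ^ 2) :=
    fun v => eq_gluedPotential hΨ (sq_nonneg _)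
  simp only [hΨG]
  exact tendsto_slope_integral_gluedPotential hr hC.le hφ₁c hφ₂c hφ₂nn hbound hw hφ hsupp

/-- directional-derivative identity on the low-speed region
(from the proof of Lemma 4.5 of the paper): if φ vanishes a.e. where ‖w‖ ≥ 1,
then (1/δ)∫ (Ψ(‖w + δφ‖²) − Ψ(‖w‖²)) dμ → ∫ φ₁(‖w‖²) (w·φ) dμ as δ → 0⁺. -/
theorem stmt_14 {Ω : Type*} [MeasurableSpace Ω] (μ : Measure Ω) [IsFiniteMeasure μ]
    (d : ℕ) (hd : 1 ≤ d) (r : ℝ) (hr : 2 ≤ r) (C : ℝ) (hC : 0 < C)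
    (φ₁ φ₂ : ℝ → ℝ)
    (hφ₁c : ContinuousOn φ₁ (Icc 0 1)) (hφ₂c : ContinuousOn φ₂ (Ici 1))
    (hφ₁m : MonotoneOn φ₁ (Icc 0 1)) (hφ₂m : MonotoneOn φ₂ (Ici 1))
    (hφ₁nn : ∀ a ∈ Icc (0:ℝ) 1, 0 ≤ φ₁ a) (hφ₂nn : ∀ a ∈ Ici (1:ℝ), 0 ≤ φ₂ a)
    (hbound : ∀ a : ℝ, 1 ≤ a → φ₂ a ≤ C * (1 + a ^ ((r - 2) / 2)))
    (Ψ : ℝ → ℝ)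
    (hΨ : ∀ a : ℝ, 0 ≤ a →
      Ψ a = if a ≤ 1 then (1/2) * ∫ t in (1:ℝ)..a, φ₁ t
            else (1/2) * ∫ t in (1:ℝ)..a, φ₂ t)
    (w φ : Ω → EuclideanSpace ℝ (Fin d))
    (hw : MemLp w (ENNReal.ofReal r) μ) (hφ : MemLp φ (ENNReal.ofReal r) μ)
    (hsupp : ∀ᵐ x ∂μ, 1 ≤ ‖w x‖ → φ x = 0) :
    Tendsto (fun δ : ℝ =>
        (1 / δ) * ∫ x, (Ψ (‖w x + δ • φ x‖ ^ 2) - Ψ (‖w x‖ ^ 2)) ∂μ)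
      (nhdsWithin 0 (Ioi 0))
      (nhds (∫ x, φ₁ (‖w x‖ ^ 2) * ⟪w x, φ x⟫ ∂μ)) :=
  stmt_14_general μ d r hr C hC φ₁ φ₂ hφ₁c hφ₂c hφ₂nn hbound Ψ hΨ w φ hw hφ hsupp
end
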